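/- arXiv:1706.00289 — 3 statements merged into one kernel-verified Lean document; each statement's English description precedes it below -/
import Mathlib

section
/- Let f, g : S → ℝ be nonnegative integrable functions on a measure space S, neither identically zero (i.e. with positive integrals), and let F ⊆ S be measurable. Then ∫_F |f/(∫ f) − g/(∫ g)| ≤ (∫_{Fᶜ} f)/(∫ f) + (∫_{Fᶜ} g)/(∫ g) + 3 (∫ g)⁻¹ ∫_F |f − g|. -/
open MeasureTheory

/-- Ghosal's lemma: for nonnegative integrable `f, g` with positive integrals and a
measurable set `F`, the restricted TV-type distance between normalized densities is bounded. -/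
theorem stmt0 {S : Type*} [MeasurableSpace S] (μ : Measure S)
    (f g : S → ℝ) (F : Set S) (hF : MeasurableSet F)
    (hf : Integrable f μ) (hg : Integrable g μ)
    (hf0 : ∀ x, 0 ≤ f x) (hg0 : ∀ x, 0 ≤ g x)
    (hfpos : 0 < ∫ x, f x ∂μ) (hgpos : 0 < ∫ x, g x ∂μ) :
    ∫ x in F, |f x / (∫ y, f y ∂μ) - g x / (∫ y, g y ∂μ)| ∂μ ≤
      (∫ x in Fᶜ, f x ∂μ) / (∫ y, f y ∂μ) + (∫ x in Fᶜ, g x ∂μ) / (∫ y, g y ∂μ)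
        + 3 * (∫ y, g y ∂μ)⁻¹ * ∫ x in F, |f x - g x| ∂μ := by
  set A := ∫ y, f y ∂μ with hA
  set B := ∫ y, g y ∂μ with hB
  have hA0 : A ≠ 0 := ne_of_gt hfpos
  have hB0 : B ≠ 0 := ne_of_gt hgpos
  set I := ∫ x in F, |f x - g x| ∂μ with hI
  set c := ∫ x in F, f x ∂μ with hc
  set d := ∫ x in Fᶜ, f x ∂μ with hd
  set Gc := ∫ x in Fᶜ, g x ∂μ with hGc
  have hfg : Integrable (fun x => |f x - g x|) μ := (hf.sub hg).abs
  -- nonnegativity of the various integrals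
  have hI0 : 0 ≤ I := setIntegral_nonneg hF (fun x _ => abs_nonneg _)
  have hc0 : 0 ≤ c := setIntegral_nonneg hF (fun x _ => hf0 x)
  have hd0 : 0 ≤ d := setIntegral_nonneg hF.compl (fun x _ => hf0 x)
  have hGc0 : 0 ≤ Gc := setIntegral_nonneg hF.compl (fun x _ => hg0 x)
  -- splitting of the total integrals
  have hsplitf : c + d = A := integral_add_compl hF hf
  have hsplitg : (∫ x in F, g x ∂μ) + Gc = B := integral_add_compl hF hg
  -- pointwise bound
  have hpt : ∀ x, |f x / A - g x / B| ≤ |f x - g x| * B⁻¹ + f x * (|A - B| / (A * B)) := by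
    intro x
    have heq : f x / A - g x / B = (f x - g x) / B + f x * ((B - A) / (A * B)) := by
      field_simp
      ring
    calc |f x / A - g x / B| ≤ |(f x - g x) / B| + |f x * ((B - A) / (A * B))| := by
          rw [heq]; exact abs_add_le _ _
      _ = |f x - g x| * B⁻¹ + f x * (|A - B| / (A * B)) := by
          rw [abs_div, abs_mul, abs_div, abs_mul, abs_of_pos hfpos, abs_of_pos hgpos,
            abs_of_nonneg (hf0 x), abs_sub_comm B A, div_eq_mul_inv]
  -- integral bound
  have hint : ∫ x in F, |f x / A - g x / B| ∂μ ≤ I * B⁻¹ + c * (|A - B| / (A * B)) := by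
    have h1 : Integrable (fun x => |f x - g x| * B⁻¹ + f x * (|A - B| / (A * B)))
        (μ.restrict F) := ((hfg.mul_const _).add (hf.mul_const _)).restrict
    calc ∫ x in F, |f x / A - g x / B| ∂μ
        ≤ ∫ x in F, (|f x - g x| * B⁻¹ + f x * (|A - B| / (A * B))) ∂μ := by
          refine integral_mono_of_nonneg (Filter.Eventually.of_forall fun x => abs_nonneg _)
            h1 (Filter.Eventually.of_forall fun x => hpt x)
      _ = I * B⁻¹ + c * (|A - B| / (A * B)) := by
          rw [integral_add (hfg.mul_const _).restrict (hf.mul_const _).restrict,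
            integral_mul_const, integral_mul_const]
  -- bounds on |A - B|
  have hBA : B - A ≤ I + Gc := by
    have h1 : ∫ x in F, g x ∂μ ≤ (∫ x in F, f x ∂μ) + I := by
      rw [hI, ← integral_add hf.restrict hfg.restrict]
      refine integral_mono hg.restrict (hf.restrict.add hfg.restrict) fun x => ?_
      have := abs_sub_abs_le_abs_sub (f x) (g x)
      have h2 := le_abs_self (g x - f x)
      rw [abs_sub_comm] at h2
      linarith [le_abs_self (f x - g x), neg_abs_le (f x - g x)]
    have := hsplitf
    have := hsplitg
    linarith
  have hAB : A - B ≤ I + d := by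
    have h1 : ∫ x in F, f x ∂μ ≤ (∫ x in F, g x ∂μ) + I := by
      rw [hI, ← integral_add hg.restrict hfg.restrict]
      refine integral_mono hf.restrict (hg.restrict.add hfg.restrict) fun x => ?_
      linarith [le_abs_self (f x - g x)]
    have h2 : 0 ≤ ∫ x in F, g x ∂μ := setIntegral_nonneg hF fun x _ => hg0 x
    linarith
  have hcA : c ≤ A := by linarith
  -- key inequality
  have hkey : c * |A - B| ≤ A * I + d * B + A * Gc := by
    rcases le_or_gt A B with h | h
    · rw [abs_of_nonpos (by linarith)]
      nlinarith
    · rw [abs_of_pos (by linarith)]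
      have hcd : c = A - d := by linarith
      nlinarith
  -- conclude
  have hABpos : 0 < A * B := mul_pos hfpos hgpos
  have h2 : c * (|A - B| / (A * B)) ≤ I * B⁻¹ + d / A + Gc / B := by
    rw [mul_div_assoc'] 
    rw [div_le_iff₀ hABpos]
    have hd2 : (I * B⁻¹ + d / A + Gc / B) * (A * B) = A * I + d * B + A * Gc := by
      field_simp
    rw [hd2]
    exact hkey
  have h3 : I * B⁻¹ + (I * B⁻¹ + d / A + Gc / B) ≤ d / A + Gc / B + 3 * B⁻¹ * I := by
    have : 0 ≤ I * B⁻¹ := mul_nonneg hI0 (inv_nonneg.2 hgpos.le)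
    linarith
  linarith
end

section
/- Let M be symmetric positive definite d×d, v ∈ ℝ^d, and u(q) = (M + diag(q))^{-1} v. Suppose that for all q in a set F ⊆ ℝ^d, all entries of u(q) lie in [C₁, C₂] with 0 < C₁ ≤ C₂, and λ_min(M + diag(q)) ≥ c > 0 and λ_max(M + diag(q)) ≤ C for all q ∈ F. Then for all q₁, q₂ ∈ F: |u(q₁) − u(q₂)| ≤ (C₂/c)|q₁ − q₂| and |q₁ − q₂| ≤ (C/C₁)|u(q₁) − u(q₂)|, where |·| is the Euclidean norm. -/
open Matrix

/-- Euclidean norm on `ℝ^d`. -/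
noncomputable def enorm7 {d : ℕ} (x : Fin d → ℝ) : ℝ := Real.sqrt (∑ i, x i ^ 2)

/-- `u(q) = (M + diag(q))⁻¹ v`. -/
noncomputable def uSol {d : ℕ} (M : Matrix (Fin d) (Fin d) ℝ) (v : Fin d → ℝ)
    (q : Fin d → ℝ) : Fin d → ℝ :=
  (M + Matrix.diagonal q)⁻¹ *ᵥ v

/-!
Subtracting `(M + diag q₁) u₁ = v = (M + diag q₂) u₂` gives
`(M + diag q₁) (u₂ - u₁) = diag(u₂) (q₁ - q₂)`. In an orthonormal eigenbasis a symmetric matrix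
with spectrum in `[c, C]` becomes a diagonal one, so it scales Euclidean norms by a factor in
`[c, C]`; likewise `diag(u₂)` scales them by a factor in `[C₁, C₂]`. Comparing the norms of the
two sides gives both inequalities.
-/

section
variable {𝕜 ι : Type*} [RCLike 𝕜] [Fintype ι]

theorem norm_toLp_mul_le {w : ι → 𝕜} {b : ℝ} (hw : ∀ i, ‖w i‖ ≤ b) (x : ι → 𝕜) :
    ‖WithLp.toLp 2 (w * x)‖ ≤ b * ‖WithLp.toLp 2 x‖ := by
  rcases isEmpty_or_nonempty ι with hι | ⟨⟨i₀⟩⟩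
  · simp [EuclideanSpace.norm_eq]
  have hb : 0 ≤ b := (norm_nonneg _).trans (hw i₀)
  rw [EuclideanSpace.norm_eq, EuclideanSpace.norm_eq, ← Real.sqrt_sq hb,
    ← Real.sqrt_mul (sq_nonneg b), Finset.mul_sum]
  gcongr with i
  simp only [Pi.mul_apply, norm_mul, mul_pow]
  gcongr
  exact hw i

theorem mul_norm_toLp_le_norm_toLp_mul {w : ι → 𝕜} {a : ℝ} (hw : ∀ i, a ≤ ‖w i‖) (x : ι → 𝕜) :
    a * ‖WithLp.toLp 2 x‖ ≤ ‖WithLp.toLp 2 (w * x)‖ := by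
  rcases le_or_gt a 0 with ha | ha
  · exact (mul_nonpos_of_nonpos_of_nonneg ha (norm_nonneg _)).trans (norm_nonneg _)
  rw [EuclideanSpace.norm_eq, EuclideanSpace.norm_eq, ← Real.sqrt_sq ha.le,
    ← Real.sqrt_mul (sq_nonneg a), Finset.mul_sum]
  gcongr with i
  simp only [Pi.mul_apply, norm_mul, mul_pow]
  gcongr
  exact hw i

namespace Matrix.IsHermitian

variable [DecidableEq ι] {A : Matrix ι ι 𝕜}

theorem repr_eigenvectorBasis_toLp_mulVec (hA : A.IsHermitian) (x : ι → 𝕜) :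
    (hA.eigenvectorBasis.repr (WithLp.toLp 2 (A *ᵥ x))).ofLp =
      (fun i => (hA.eigenvalues i : 𝕜)) * (hA.eigenvectorBasis.repr (WithLp.toLp 2 x)).ofLp := by
  ext i
  have hsymm := isSymmetric_toEuclideanLin_iff.mpr hA (hA.eigenvectorBasis i) (WithLp.toLp 2 x)
  simp only [toLpLin_apply, hA.mulVec_eigenvectorBasis] at hsymm
  rw [Pi.mul_apply, OrthonormalBasis.repr_apply_apply, OrthonormalBasis.repr_apply_apply, ← hsymm,
    WithLp.toLp_smul, WithLp.toLp_ofLp, RCLike.real_smul_eq_coe_smul (K := 𝕜),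
    inner_smul_real_left, RCLike.real_smul_eq_coe_mul]

theorem norm_toLp_mulVec_le (hA : A.IsHermitian) {b : ℝ}
    (h : ∀ i, |hA.eigenvalues i| ≤ b) (x : ι → 𝕜) :
    ‖WithLp.toLp 2 (A *ᵥ x)‖ ≤ b * ‖WithLp.toLp 2 x‖ := by
  have := norm_toLp_mul_le (w := fun i => (hA.eigenvalues i : 𝕜)) (by simpa using h)
    (hA.eigenvectorBasis.repr (WithLp.toLp 2 x)).ofLp
  rwa [← hA.repr_eigenvectorBasis_toLp_mulVec, WithLp.toLp_ofLp, WithLp.toLp_ofLp,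
    LinearIsometryEquiv.norm_map, LinearIsometryEquiv.norm_map] at this

theorem mul_norm_toLp_le_norm_toLp_mulVec (hA : A.IsHermitian) {a : ℝ}
    (h : ∀ i, a ≤ |hA.eigenvalues i|) (x : ι → 𝕜) :
    a * ‖WithLp.toLp 2 x‖ ≤ ‖WithLp.toLp 2 (A *ᵥ x)‖ := by
  have := mul_norm_toLp_le_norm_toLp_mul (w := fun i => (hA.eigenvalues i : 𝕜)) (by simpa using h)
    (hA.eigenvectorBasis.repr (WithLp.toLp 2 x)).ofLp
  rwa [← hA.repr_eigenvectorBasis_toLp_mulVec, WithLp.toLp_ofLp, WithLp.toLp_ofLp,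
    LinearIsometryEquiv.norm_map, LinearIsometryEquiv.norm_map] at this

end Matrix.IsHermitian

end

theorem abs_mem_Icc_of_mem_Icc {a b x : ℝ} (ha : 0 < a) (h : x ∈ Set.Icc a b) :
    |x| ∈ Set.Icc a b := by
  rwa [abs_of_pos (ha.trans_le h.1)]

theorem add_diagonal_mulVec_sub {ι R : Type*} [Fintype ι] [DecidableEq ι] [CommRing R]
    {M : Matrix ι ι R} {q₁ q₂ u₁ u₂ v : ι → R}
    (h₁ : (M + diagonal q₁) *ᵥ u₁ = v) (h₂ : (M + diagonal q₂) *ᵥ u₂ = v) :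
    (M + diagonal q₁) *ᵥ (u₂ - u₁) = (q₁ - q₂) * u₂ := by
  rw [mulVec_sub, h₁, ← h₂, add_mulVec, add_mulVec]
  ext i
  simp only [Pi.sub_apply, Pi.add_apply, Pi.mul_apply, mulVec_diagonal]
  ring

theorem enorm7_eq_norm {d : ℕ} (x : Fin d → ℝ) : enorm7 x = ‖WithLp.toLp 2 x‖ := by
  simp [enorm7, EuclideanSpace.norm_eq]

theorem enorm7_sub_comm {d : ℕ} (x y : Fin d → ℝ) : enorm7 (x - y) = enorm7 (y - x) := by
  rw [enorm7_eq_norm, enorm7_eq_norm, WithLp.toLp_sub, WithLp.toLp_sub, norm_sub_rev]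

theorem mulVec_uSol {d : ℕ} {M : Matrix (Fin d) (Fin d) ℝ} {q : Fin d → ℝ}
    (h : IsUnit (M + diagonal q)) (v : Fin d → ℝ) : (M + diagonal q) *ᵥ uSol M v q = v := by
  rw [uSol, mulVec_mulVec, mul_nonsing_inv _ ((isUnit_iff_isUnit_det _).mp h), one_mulVec]

theorem stmt7_general {d : ℕ} (M : Matrix (Fin d) (Fin d) ℝ) (v : Fin d → ℝ)
    (hM : M.PosDef) (F : Set (Fin d → ℝ)) (C₁ C₂ c C : ℝ)
    (hC₁ : 0 < C₁) (hc : 0 < c)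
    (hbounds : ∀ q ∈ F, ∀ i, C₁ ≤ uSol M v q i ∧ uSol M v q i ≤ C₂)
    (heig : ∀ q ∈ F, ∀ μ ∈ spectrum ℝ (M + Matrix.diagonal q), c ≤ μ ∧ μ ≤ C) :
    ∀ q₁ ∈ F, ∀ q₂ ∈ F,
      enorm7 (uSol M v q₁ - uSol M v q₂) ≤ (C₂ / c) * enorm7 (q₁ - q₂) ∧
      enorm7 (q₁ - q₂) ≤ (C / C₁) * enorm7 (uSol M v q₁ - uSol M v q₂) := by
  intro q₁ hq₁ q₂ hq₂
  set u₁ := uSol M v q₁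
  set u₂ := uSol M v q₂
  have hsol : ∀ q ∈ F, (M + diagonal q) *ᵥ uSol M v q = v := fun q hq =>
    mulVec_uSol ((spectrum.zero_notMem_iff ℝ).mp fun h0 => (heig q hq 0 h0).1.not_gt hc) v
  have hkey : (M + diagonal q₁) *ᵥ (u₂ - u₁) = u₂ * (q₁ - q₂) := by
    rw [add_diagonal_mulVec_sub (hsol q₁ hq₁) (hsol q₂ hq₂), mul_comm]
  have hA := hM.isHermitian.add (isHermitian_diagonal q₁)
  have hev : ∀ i, |hA.eigenvalues i| ∈ Set.Icc c C := fun i =>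
    abs_mem_Icc_of_mem_Icc hc (heig q₁ hq₁ _ (hA.eigenvalues_mem_spectrum_real i))
  have hu : ∀ i, ‖u₂ i‖ ∈ Set.Icc C₁ C₂ := fun i => abs_mem_Icc_of_mem_Icc hC₁ (hbounds q₂ hq₂ i)
  have hdu : c * enorm7 (u₂ - u₁) ≤ C₂ * enorm7 (q₁ - q₂) := by
    simp only [enorm7_eq_norm]
    calc _ ≤ ‖WithLp.toLp 2 ((M + diagonal q₁) *ᵥ (u₂ - u₁))‖ :=
          hA.mul_norm_toLp_le_norm_toLp_mulVec (fun i => (hev i).1) _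
      _ ≤ C₂ * ‖WithLp.toLp 2 (q₁ - q₂)‖ := by
          rw [hkey]; exact norm_toLp_mul_le (fun i => (hu i).2) _
  have hdq : C₁ * enorm7 (q₁ - q₂) ≤ C * enorm7 (u₂ - u₁) := by
    simp only [enorm7_eq_norm]
    calc _ ≤ ‖WithLp.toLp 2 ((M + diagonal q₁) *ᵥ (u₂ - u₁))‖ := by
          rw [hkey]; exact mul_norm_toLp_le_norm_toLp_mul (fun i => (hu i).1) _
      _ ≤ C * ‖WithLp.toLp 2 (u₂ - u₁)‖ := hA.norm_toLp_mulVec_le (fun i => (hev i).2) _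
  rw [enorm7_sub_comm u₁, div_mul_eq_mul_div, div_mul_eq_mul_div, le_div_iff₀ hc,
    le_div_iff₀ hC₁, mul_comm _ c, mul_comm _ C₁]
  exact ⟨hdu, hdq⟩

/-- Two-sided Lipschitz stability: `|u(q₁) − u(q₂)| ≤ (C₂/c)|q₁ − q₂|` and
`|q₁ − q₂| ≤ (C/C₁)|u(q₁) − u(q₂)|`. -/
theorem stmt7 {d : ℕ} (M : Matrix (Fin d) (Fin d) ℝ) (v : Fin d → ℝ)
    (hM : M.PosDef) (F : Set (Fin d → ℝ)) (C₁ C₂ c C : ℝ)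
    (hC₁ : 0 < C₁) (hC₁₂ : C₁ ≤ C₂) (hc : 0 < c)
    (hbounds : ∀ q ∈ F, ∀ i, C₁ ≤ uSol M v q i ∧ uSol M v q i ≤ C₂)
    (heig : ∀ q ∈ F, ∀ μ ∈ spectrum ℝ (M + Matrix.diagonal q), c ≤ μ ∧ μ ≤ C) :
    ∀ q₁ ∈ F, ∀ q₂ ∈ F,
      enorm7 (uSol M v q₁ - uSol M v q₂) ≤ (C₂ / c) * enorm7 (q₁ - q₂) ∧
      enorm7 (q₁ - q₂) ≤ (C / C₁) * enorm7 (uSol M v q₁ - uSol M v q₂) :=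
  stmt7_general M v hM F C₁ C₂ c C hC₁ hc hbounds heig
end

section
/- Let M be symmetric positive definite d×d, u(q) = (M + diag(q))^{-1} v, and ∇G(q₂) = −(M + diag(q₂))^{-1} diag(u(q₂)). Suppose for q₁, q₂ in a set F, λ_min(M + diag(q)) ≥ c > 0 for all q ∈ F and the entries of u(q) are bounded by C₂. Then |u(q₁) − u(q₂) − ∇G(q₂)(q₁ − q₂)| ≤ (C₂/c²)|q₁ − q₂|², where |·| is the Euclidean norm. -/
/-!
With `A q := M + diag q` and `δ := q₁ - q₂`, the resolvent identity
`A q₁⁻¹ - A q₂⁻¹ = -A q₁⁻¹ diag δ A q₂⁻¹` says `u(q₁) - u(q₂)` is minus the solution at `q₁` with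
right-hand side `diag δ u(q₂)`, while `∇G(q₂) δ` is minus the solution at `q₂` with the same
right-hand side. Applying the identity once more, the Taylor remainder is exactly
`A q₁⁻¹ diag δ A q₂⁻¹ diag δ u(q₂)`. A symmetric matrix with spectrum `≥ c` satisfies
`c |x|² ≤ xᵀ A x ≤ |x| |A x|`, so each inverse costs `1/c`; the first `diag δ` costs `|δ|` and
`diag δ u(q₂) = diag u(q₂) δ` costs `C₂ |δ|`.
-/

open Matrix

/-- Euclidean norm on `ℝ^d`. -/
noncomputable def enorm8 {d : ℕ} (x : Fin d → ℝ) : ℝ := Real.sqrt (∑ i, x i ^ 2)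

/-- The Jacobian `∇G(q) = −(M + diag(q))⁻¹ diag(u(q))`. -/
noncomputable def DG {d : ℕ} (M : Matrix (Fin d) (Fin d) ℝ) (v : Fin d → ℝ)
    (q : Fin d → ℝ) : Matrix (Fin d) (Fin d) ℝ :=
  -(M + Matrix.diagonal q)⁻¹ * Matrix.diagonal (uSol M v q)

theorem isUnit_of_forall_spectrum_ge {A : Type*} [Ring A] [Algebra ℝ A] {a : A} {c : ℝ}
    (hc : 0 < c) (h : ∀ μ ∈ spectrum ℝ a, c ≤ μ) : IsUnit a :=
  spectrum.isUnit_of_zero_notMem ℝ fun h0 => hc.not_ge (h 0 h0)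

theorem Matrix.IsHermitian.mul_dotProduct_self_le_dotProduct_mulVec {n : Type*} [Fintype n]
    [DecidableEq n] {A : Matrix n n ℝ} (hA : A.IsHermitian) {c : ℝ}
    (hc : ∀ μ ∈ spectrum ℝ A, c ≤ μ) (x : n → ℝ) : c * (x ⬝ᵥ x) ≤ x ⬝ᵥ (A *ᵥ x) := by
  have hpsd : (A - algebraMap ℝ _ c).PosSemidef := by
    refine posSemidef_iff_isHermitian_and_spectrum_nonneg.2
      ⟨hA.sub (by simp [algebraMap_eq_diagonal]), ?_⟩
    rw [← spectrum.sub_singleton_eq]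
    rintro _ ⟨μ, hμ, _, rfl, rfl⟩
    simpa using hc μ hμ
  simpa [Algebra.algebraMap_eq_smul_one, sub_mulVec, smul_mulVec, dotProduct_sub] using
    hpsd.dotProduct_mulVec_nonneg x

section
variable {d : ℕ}

theorem enorm8_nonneg (x : Fin d → ℝ) : 0 ≤ enorm8 x := Real.sqrt_nonneg _

theorem enorm8_sq (x : Fin d → ℝ) : enorm8 x ^ 2 = x ⬝ᵥ x := by
  rw [enorm8, Real.sq_sqrt (by positivity)]
  simp [dotProduct, sq]

theorem abs_le_enorm8 (x : Fin d → ℝ) (i : Fin d) : |x i| ≤ enorm8 x := by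
  rw [← Real.sqrt_sq_eq_abs]
  exact Real.sqrt_le_sqrt (Finset.single_le_sum (fun j _ => sq_nonneg (x j)) (Finset.mem_univ i))

theorem enorm8_diagonal_mulVec_le {w : Fin d → ℝ} {C : ℝ} (hw : ∀ i, |w i| ≤ C)
    (x : Fin d → ℝ) : enorm8 (diagonal w *ᵥ x) ≤ C * enorm8 x := by
  rcases isEmpty_or_nonempty (Fin d) with hd | ⟨⟨i⟩⟩
  · simp [enorm8]
  have hC : 0 ≤ C := (abs_nonneg _).trans (hw i)
  rw [enorm8, enorm8, ← Real.sqrt_sq hC, ← Real.sqrt_mul (sq_nonneg C), Finset.mul_sum]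
  refine Real.sqrt_le_sqrt (Finset.sum_le_sum fun j _ => ?_)
  rw [mulVec_diagonal, mul_pow]
  exact mul_le_mul_of_nonneg_right (sq_le_sq' (abs_le.1 (hw j)).1 (abs_le.1 (hw j)).2)
    (sq_nonneg _)

theorem mul_enorm8_le_enorm8_mulVec {A : Matrix (Fin d) (Fin d) ℝ} (hA : A.IsHermitian)
    {c : ℝ} (hc : ∀ μ ∈ spectrum ℝ A, c ≤ μ) (x : Fin d → ℝ) :
    c * enorm8 x ≤ enorm8 (A *ᵥ x) := by
  have hquad := hA.mul_dotProduct_self_le_dotProduct_mulVec hc x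
  have hCS : x ⬝ᵥ (A *ᵥ x) ≤ enorm8 x * enorm8 (A *ᵥ x) :=
    Real.sum_mul_le_sqrt_mul_sqrt Finset.univ x (A *ᵥ x)
  rw [← enorm8_sq] at hquad
  rcases (enorm8_nonneg x).eq_or_lt with hx | hx
  · rw [← hx, mul_zero]; exact enorm8_nonneg _
  · nlinarith

theorem enorm8_inv_mulVec_le {A : Matrix (Fin d) (Fin d) ℝ} (hA : A.IsHermitian)
    {c : ℝ} (hc : 0 < c) (hspec : ∀ μ ∈ spectrum ℝ A, c ≤ μ) (y : Fin d → ℝ) :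
    enorm8 (A⁻¹ *ᵥ y) ≤ enorm8 y / c := by
  rw [le_div_iff₀ hc, mul_comm]
  simpa [mulVec_mulVec, mul_nonsing_inv A
    ((isUnit_iff_isUnit_det A).1 (isUnit_of_forall_spectrum_ge hc hspec))] using
    mul_enorm8_le_enorm8_mulVec hA hspec (A⁻¹ *ᵥ y)

theorem diagonal_mulVec_comm (w x : Fin d → ℝ) : diagonal w *ᵥ x = diagonal x *ᵥ w := by
  ext i; simp [mulVec_diagonal, mul_comm]

theorem enorm8_uSol_le {M : Matrix (Fin d) (Fin d) ℝ} (hM : M.IsHermitian) {q : Fin d → ℝ}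
    {c : ℝ} (hc : 0 < c) (hspec : ∀ μ ∈ spectrum ℝ (M + diagonal q), c ≤ μ) (v : Fin d → ℝ) :
    enorm8 (uSol M v q) ≤ enorm8 v / c :=
  enorm8_inv_mulVec_le (hM.add (isHermitian_diagonal q)) hc hspec v

variable (M : Matrix (Fin d) (Fin d) ℝ) (v : Fin d → ℝ)

theorem uSol_sub_uSol {q₁ q₂ : Fin d → ℝ}
    (h : IsUnit (M + diagonal q₁) ↔ IsUnit (M + diagonal q₂)) :
    uSol M v q₁ - uSol M v q₂ = -uSol M (diagonal (q₁ - q₂) *ᵥ uSol M v q₂) q₁ := by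
  have hdiff : M + diagonal q₂ - (M + diagonal q₁) = -diagonal (q₁ - q₂) := by
    rw [add_sub_add_left_eq_sub, ← neg_sub, diagonal_sub]
    rfl
  simp only [uSol, ← sub_mulVec, inv_sub_inv h, hdiff, mulVec_mulVec, mul_neg, neg_mul,
    neg_mulVec, Matrix.mul_assoc]

theorem DG_mulVec (q δ : Fin d → ℝ) :
    DG M v q *ᵥ δ = -uSol M (diagonal δ *ᵥ uSol M v q) q := by
  rw [DG, ← mulVec_mulVec, neg_mulVec, diagonal_mulVec_comm]
  rfl

theorem uSol_sub_uSol_sub_DG_mulVec {q₁ q₂ : Fin d → ℝ}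
    (h : IsUnit (M + diagonal q₁) ↔ IsUnit (M + diagonal q₂)) :
    uSol M v q₁ - uSol M v q₂ - DG M v q₂ *ᵥ (q₁ - q₂) =
      uSol M (diagonal (q₁ - q₂) *ᵥ uSol M (diagonal (q₁ - q₂) *ᵥ uSol M v q₂) q₂) q₁ := by
  rw [uSol_sub_uSol M v h, DG_mulVec, sub_neg_eq_add, neg_add_eq_sub, ← neg_sub,
    uSol_sub_uSol M _ h, neg_neg]

end

/-- Second-order Taylor remainder bound:
`|u(q₁) − u(q₂) − ∇G(q₂)(q₁ − q₂)| ≤ (C₂/c²)|q₁ − q₂|²`. -/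
theorem stmt8 {d : ℕ} (M : Matrix (Fin d) (Fin d) ℝ) (v : Fin d → ℝ)
    (hM : M.PosDef) (F : Set (Fin d → ℝ)) (c C₂ : ℝ) (hc : 0 < c)
    (heig : ∀ q ∈ F, ∀ μ ∈ spectrum ℝ (M + Matrix.diagonal q), c ≤ μ)
    (hbound : ∀ q ∈ F, ∀ i, |uSol M v q i| ≤ C₂) :
    ∀ q₁ ∈ F, ∀ q₂ ∈ F,
      enorm8 (uSol M v q₁ - uSol M v q₂ - DG M v q₂ *ᵥ (q₁ - q₂)) ≤
        (C₂ / c ^ 2) * enorm8 (q₁ - q₂) ^ 2 := by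
  intro q₁ hq₁ q₂ hq₂
  set δ := q₁ - q₂
  have hsol : ∀ q ∈ F, ∀ y, enorm8 (uSol M y q) ≤ enorm8 y / c :=
    fun q hq => enorm8_uSol_le hM.isHermitian hc (heig q hq)
  have hδ : ∀ y, enorm8 (diagonal δ *ᵥ y) ≤ enorm8 δ * enorm8 y :=
    enorm8_diagonal_mulVec_le (abs_le_enorm8 δ)
  have hδu₂ : enorm8 (diagonal δ *ᵥ uSol M v q₂) ≤ C₂ * enorm8 δ := by
    rw [diagonal_mulVec_comm]
    exact enorm8_diagonal_mulVec_le (hbound q₂ hq₂) δ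
  have hδ0 := enorm8_nonneg δ
  rw [uSol_sub_uSol_sub_DG_mulVec M v
    (iff_of_true (isUnit_of_forall_spectrum_ge hc (heig q₁ hq₁))
      (isUnit_of_forall_spectrum_ge hc (heig q₂ hq₂)))]
  calc _ ≤ enorm8 (diagonal δ *ᵥ uSol M (diagonal δ *ᵥ uSol M v q₂) q₂) / c := hsol q₁ hq₁ _
    _ ≤ enorm8 δ * enorm8 (uSol M (diagonal δ *ᵥ uSol M v q₂) q₂) / c := by gcongr; exact hδ _
    _ ≤ enorm8 δ * (enorm8 (diagonal δ *ᵥ uSol M v q₂) / c) / c := by gcongr; exact hsol q₂ hq₂ _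
    _ ≤ enorm8 δ * (C₂ * enorm8 δ / c) / c := by gcongr
    _ = C₂ / c ^ 2 * enorm8 δ ^ 2 := by ring
end
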